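/- Let 1 ≤ k2, k1 = t1 with t1 ≤ min(n1, m), t2 = m with k2 ≤ t2 ≤ n2, and m < t1·t2. Let g1 ∈ L^{n1} with wt_R(g1) = t1 and g2 ∈ L^{n2} with wt_R(g2) = t2 = m, and let C be the row space of Moore(g1,k1) ⊗ Moore(g2,k2). Let r be a natural number with 2r ≤ t2 − k2. Then for every vector y indexed by {1..n1}×{1..n2} with entries in L and all codewords c, c' ∈ C with wt_R(y − c) ≤ r and wt_R(y − c') ≤ r, one has c = c'. (That is, the extended Gabidulin–Kronecker product code corrects every error of rank weight at most ⌊(t2 − k2)/2⌋ uniquely.) -/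

import Mathlib

/-!
Write `q = #K`. Entry `(j1, j2)` of the codeword with message `x` is `Λ (g2 j2)`, where `Λ` is
the linearized polynomial `z ↦ ∑ a_{i2} z ^ q ^ i2` with `a_{i2} = ∑ x (i1, i2) g1_{j1} ^ q ^ i1`,
a `K`-linear map of `q`-degree `< k2`. The difference of two codewords within rank distance `r`
of `y` has all its entries in a space of dimension `≤ 2r ≤ m - k2`. Since `g2` spans `L`, `Λ`
maps `L` into that space, so its kernel has dimension `≥ k2`, i.e. at least `q ^ k2` roots:
hence `Λ = 0`, i.e. every `a_{i2}` vanishes. Then the linearized polynomial with coefficients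
`x (·, i2)` vanishes on the span of `g1`, of dimension `t1 = k1`, and the same count gives `x = 0`.
-/

open Matrix Kronecker

/-- Rank weight of a vector over the extension `L` of the base field `K`. -/
noncomputable def rankWeight (K : Type*) {L : Type*} [Field K] [Field L] [Algebra K L]
    {ι : Type*} (v : ι → L) : ℕ :=
  Module.finrank K (Submodule.span K (Set.range v))

/-- The `k × n` Moore matrix of `g`: entry `(i, j)` is `g j ^ q ^ i`. -/
def moore (q : ℕ) {L : Type*} [Field L] {n : ℕ} (g : Fin n → L) (k : ℕ) :
    Matrix (Fin k) (Fin n) L :=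
  Matrix.of fun i j => g j ^ q ^ (i : ℕ)

open Polynomial Module

section LinearizedPoly

variable {R : Type*} [CommSemiring R] {k : ℕ}

noncomputable def linearizedPoly (q : ℕ) (a : Fin k → R) : R[X] :=
  ∑ i, C (a i) * X ^ q ^ (i : ℕ)

theorem eval_linearizedPoly (q : ℕ) (a : Fin k → R) (z : R) :
    (linearizedPoly q a).eval z = ∑ i, a i * z ^ q ^ (i : ℕ) := by
  simp [linearizedPoly, eval_finsetSum]

theorem coeff_linearizedPoly_pow {q : ℕ} (hq : 1 < q) (a : Fin k → R) (j : Fin k) :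
    (linearizedPoly q a).coeff (q ^ (j : ℕ)) = a j := by
  rw [linearizedPoly, finsetSum_coeff, Finset.sum_eq_single j]
  · simp
  · intro i _ hij
    rw [coeff_C_mul, coeff_X_pow, if_neg, mul_zero]
    exact fun h => hij (Fin.ext (Nat.pow_right_injective hq h.symm))
  · simp

theorem natDegree_linearizedPoly_lt {q : ℕ} (hq : 1 < q) (a : Fin k → R) :
    (linearizedPoly q a).natDegree < q ^ k := by
  obtain _ | k := k
  · simp [linearizedPoly]
  refine (natDegree_sum_le_of_forall_le _ _ fun i _ => ?_).trans_lt
    (Nat.pow_lt_pow_right hq k.lt_succ_self)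
  exact (natDegree_C_mul_X_pow_le _ _).trans (Nat.pow_le_pow_right hq.le (Nat.le_of_lt_succ i.2))

theorem eq_zero_of_linearizedPoly_eq_zero {q : ℕ} (hq : 1 < q) {a : Fin k → R}
    (h : linearizedPoly q a = 0) : a = 0 := by
  ext j
  rw [← coeff_linearizedPoly_pow hq a j, h, coeff_zero, Pi.zero_apply]

end LinearizedPoly

section LinearizedMap

variable {K L : Type*} [Field K] [Fintype K] [Field L] [Algebra K L] {k : ℕ}

variable (K) in
noncomputable def linearizedMap (a : Fin k → L) : L →ₗ[K] L :=
  ∑ i, a i • (FiniteField.frobeniusAlgHom K L ^ (i : ℕ)).toLinearMap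

theorem linearizedMap_apply (a : Fin k → L) (z : L) :
    linearizedMap K a z = ∑ i, a i * z ^ Fintype.card K ^ (i : ℕ) := by
  simp [linearizedMap, LinearMap.sum_apply, AlgHom.coe_pow, FiniteField.coe_frobeniusAlgHom,
    pow_iterate]

theorem linearizedMap_apply_eq_eval (a : Fin k → L) (z : L) :
    linearizedMap K a z = (linearizedPoly (Fintype.card K) a).eval z := by
  rw [linearizedMap_apply, eval_linearizedPoly]

/-- The kernel has `#K ^ finrank ≥ #K ^ k` elements, all roots of a polynomial of degree
`≤ #K ^ (k - 1)`. -/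
theorem eq_zero_of_le_finrank_ker_linearizedMap {a : Fin k → L}
    (h : k ≤ finrank K (LinearMap.ker (linearizedMap K a))) : a = 0 := by
  obtain rfl | hk := k.eq_zero_or_pos
  · exact Subsingleton.elim _ _
  set W := LinearMap.ker (linearizedMap K a)
  have : Module.Finite K W := Module.finite_of_finrank_pos (hk.trans_le h)
  have : Finite W := Module.finite_of_finite K
  have : Fintype W := Fintype.ofFinite W
  have hq : 1 < Fintype.card K := Fintype.one_lt_card
  refine eq_zero_of_linearizedPoly_eq_zero hq <|
    eq_zero_of_natDegree_lt_card_of_eval_eq_zero _ Subtype.val_injective (fun z : W => ?_) ?_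
  · rw [← linearizedMap_apply_eq_eval]
    exact z.2
  · calc _ < Fintype.card K ^ k := natDegree_linearizedPoly_lt hq a
      _ ≤ Fintype.card K ^ finrank K W := Nat.pow_le_pow_right hq.le h
      _ = Fintype.card W := card_eq_pow_finrank.symm

theorem eq_zero_of_range_linearizedMap_le [FiniteDimensional K L] {a : Fin k → L}
    {V : Submodule K L} (hrange : LinearMap.range (linearizedMap K a) ≤ V)
    (hV : finrank K V + k ≤ finrank K L) : a = 0 := by
  refine eq_zero_of_le_finrank_ker_linearizedMap (K := K) ?_
  have := LinearMap.finrank_range_add_finrank_ker (linearizedMap K a)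
  have := Submodule.finrank_mono hrange
  omega

end LinearizedMap

theorem rankWeight_sub_le (K : Type*) {L ι : Type*} [Field K] [Field L] [Algebra K L] [Finite ι]
    (u v : ι → L) : rankWeight K (u - v) ≤ rankWeight K u + rankWeight K v := by
  unfold rankWeight
  have := FiniteDimensional.span_of_finite K (Set.finite_range u)
  have := FiniteDimensional.span_of_finite K (Set.finite_range v)
  refine (Submodule.finrank_mono ?_).trans (Submodule.finrank_add_le_finrank_add_finrank _ _)
  rw [Submodule.span_le]
  rintro _ ⟨i, rfl⟩
  exact Submodule.sub_mem_sup (Submodule.subset_span ⟨i, rfl⟩) (Submodule.subset_span ⟨i, rfl⟩)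

theorem LinearMap.range_le_of_span_eq_top {K M N ι : Type*} [Field K] [AddCommGroup M]
    [Module K M] [AddCommGroup N] [Module K N] {g : ι → M} (hg : Submodule.span K (Set.range g) = ⊤)
    (f : M →ₗ[K] N) {V : Submodule K N} (hV : ∀ i, f (g i) ∈ V) : LinearMap.range f ≤ V := by
  rw [LinearMap.range_eq_map, ← hg, Submodule.map_span_le]
  rintro _ ⟨i, rfl⟩
  exact hV i

section Kronecker

variable {K L : Type*} [Field K] [Fintype K] [Field L] [Algebra K L]
  {n1 n2 k1 k2 : ℕ} {g1 : Fin n1 → L} {g2 : Fin n2 → L}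

theorem vecMul_kronecker_moore_apply (x : Fin k1 × Fin k2 → L) (j1 : Fin n1) (j2 : Fin n2) :
    (x ᵥ* (moore (Fintype.card K) g1 k1 ⊗ₖ moore (Fintype.card K) g2 k2)) (j1, j2) =
      linearizedMap K (fun i2 => linearizedMap K (fun i1 => x (i1, i2)) (g1 j1)) (g2 j2) := by
  simp only [vecMul, dotProduct, kroneckerMap_apply, moore, of_apply, linearizedMap_apply,
    Fintype.sum_prod_type, Finset.sum_mul]
  rw [Finset.sum_comm]
  exact Finset.sum_congr rfl fun _ _ => Finset.sum_congr rfl fun _ _ => by ring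

theorem eq_zero_of_rankWeight_vecMul_kronecker_moore_add_le [FiniteDimensional K L]
    (hg1 : k1 ≤ rankWeight K g1) (hg2 : rankWeight K g2 = finrank K L) (x : Fin k1 × Fin k2 → L)
    (hx : rankWeight K (x ᵥ* (moore (Fintype.card K) g1 k1 ⊗ₖ moore (Fintype.card K) g2 k2)) + k2
      ≤ finrank K L) :
    x = 0 := by
  have hg2_span : Submodule.span K (Set.range g2) = ⊤ := Submodule.eq_top_of_finrank_eq hg2
  have h_inner (j1 : Fin n1) :
      (fun i2 => linearizedMap K (fun i1 => x (i1, i2)) (g1 j1)) = 0 := by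
    refine eq_zero_of_range_linearizedMap_le (LinearMap.range_le_of_span_eq_top hg2_span _ ?_) hx
    intro j2
    rw [← vecMul_kronecker_moore_apply]
    exact Submodule.subset_span ⟨(j1, j2), rfl⟩
  ext ⟨i1, i2⟩
  have h_span_le : Submodule.span K (Set.range g1) ≤
      LinearMap.ker (linearizedMap K fun i1 => x (i1, i2)) := by
    rw [Submodule.span_le]
    rintro _ ⟨j1, rfl⟩
    exact congrFun (h_inner j1) i2
  exact congrFun (eq_zero_of_le_finrank_ker_linearizedMap
    (hg1.trans (Submodule.finrank_mono h_span_le))) i1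

end Kronecker

theorem egk_unique_decoding_case1_general
    (q m n1 k1 n2 k2 t1 t2 r : ℕ)
    (K L : Type*) [Field K] [Fintype K] [Field L] [Algebra K L]
    (hq : Fintype.card K = q) (hm : Module.finrank K L = m)
    (hk2pos : 1 ≤ k2) (hk1t1 : k1 = t1)
    (ht2m : t2 = m) (hk2t2 : k2 ≤ t2)
    (g1 : Fin n1 → L) (hg1 : rankWeight K g1 = t1)
    (g2 : Fin n2 → L) (hg2 : rankWeight K g2 = t2)
    (hr : 2 * r ≤ t2 - k2) :
    ∀ y c c' : Fin n1 × Fin n2 → L,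
      (∃ x : Fin k1 × Fin k2 → L, c = x ᵥ* (moore q g1 k1 ⊗ₖ moore q g2 k2)) →
      (∃ x : Fin k1 × Fin k2 → L, c' = x ᵥ* (moore q g1 k1 ⊗ₖ moore q g2 k2)) →
      rankWeight K (y - c) ≤ r → rankWeight K (y - c') ≤ r → c = c' := by
  rintro y c c' ⟨x, rfl⟩ ⟨x', rfl⟩ hyc hyc'
  subst hq hm hk1t1 ht2m
  have : FiniteDimensional K L := Module.finite_of_finrank_pos (by omega)
  have h_diff : rankWeight K ((x - x') ᵥ* (moore (Fintype.card K) g1 k1 ⊗ₖ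
      moore (Fintype.card K) g2 k2)) ≤ 2 * r := by
    rw [sub_vecMul, ← sub_sub_sub_cancel_left _ _ y]
    exact (rankWeight_sub_le K _ _).trans (by omega)
  rw [← sub_eq_zero, ← sub_vecMul,
    eq_zero_of_rankWeight_vecMul_kronecker_moore_add_le hg1.ge hg2 (x - x') (by omega),
    zero_vecMul]

theorem egk_unique_decoding_case1
    (q m n1 k1 n2 k2 t1 t2 r : ℕ)
    (K L : Type*) [Field K] [Fintype K] [Field L] [Algebra K L]
    (hq : Fintype.card K = q) (hm : Module.finrank K L = m)
    (hk2pos : 1 ≤ k2) (hk1t1 : k1 = t1) (ht1 : t1 ≤ min n1 m)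
    (ht2m : t2 = m) (hk2t2 : k2 ≤ t2) (ht2n2 : t2 ≤ n2) (hmt : m < t1 * t2)
    (g1 : Fin n1 → L) (hg1 : rankWeight K g1 = t1)
    (g2 : Fin n2 → L) (hg2 : rankWeight K g2 = t2)
    (hr : 2 * r ≤ t2 - k2) :
    ∀ y c c' : Fin n1 × Fin n2 → L,
      (∃ x : Fin k1 × Fin k2 → L, c = x ᵥ* (moore q g1 k1 ⊗ₖ moore q g2 k2)) →
      (∃ x : Fin k1 × Fin k2 → L, c' = x ᵥ* (moore q g1 k1 ⊗ₖ moore q g2 k2)) →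
      rankWeight K (y - c) ≤ r → rankWeight K (y - c') ≤ r → c = c' :=
  egk_unique_decoding_case1_general q m n1 k1 n2 k2 t1 t2 r K L hq hm hk2pos hk1t1 ht2m hk2t2 g1 hg1
    g2 hg2 hr
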